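/- Maximum principle below the principal eigenvalue: let 0 < γ < 2 and μ < λ̄'_γ(F). Suppose u : [0,1] → ℝ is continuous on [0,1], C² on (0,1), and satisfies F(D(u''(r), u'(r)/r)) + μ·u(r)·r^{−γ} ≥ 0 for all r ∈ (0,1). If u(1) ≤ 0, then u(r) ≤ 0 for all r ∈ [0,1]. -/

import Mathlib

open Set Real Filter MeasureTheory Matrix

noncomputable section

/-- The `N × N` diagonal matrix with first diagonal entry `a` and the remaining
`N - 1` diagonal entries equal to `b`. -/
def Dmat (N : ℕ) (a b : ℝ) : Matrix (Fin N) (Fin N) ℝ :=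
  Matrix.diagonal (fun i => if (i : ℕ) = 0 then a else b)

/-- Uniform ellipticity with constants `0 < lam ≤ Lam`. -/
def UnifElliptic (N : ℕ) (lam Lam : ℝ) (F : Matrix (Fin N) (Fin N) ℝ → ℝ) : Prop :=
  ∀ M P : Matrix (Fin N) (Fin N) ℝ, M.IsSymm → P.PosSemidef →
    lam * P.trace ≤ F (M + P) - F M ∧ F (M + P) - F M ≤ Lam * P.trace

/-- Rotation invariance. -/
def RotInvariant (N : ℕ) (F : Matrix (Fin N) (Fin N) ℝ → ℝ) : Prop :=
  ∀ O M : Matrix (Fin N) (Fin N) ℝ, Oᵀ * O = 1 → F (Oᵀ * M * O) = F M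

/-- Positive one-homogeneity. -/
def PosHomog (N : ℕ) (F : Matrix (Fin N) (Fin N) ℝ → ℝ) : Prop :=
  ∀ t : ℝ, 0 < t → ∀ M : Matrix (Fin N) (Fin N) ℝ, F (t • M) = t * F M

/-- The radial principal eigenvalue `λ̄'_γ(F)` on the punctured unit ball. -/
def radialEV (N : ℕ) (F : Matrix (Fin N) (Fin N) ℝ → ℝ) (γ : ℝ) : ℝ :=
  sSup {μ : ℝ | ∃ u : ℝ → ℝ, ContDiffOn ℝ 2 u (Ioo 0 1) ∧
    (∀ r ∈ Ioo (0:ℝ) 1, 0 < u r) ∧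
    (∀ r ∈ Ioo (0:ℝ) 1,
      F (Dmat N (deriv (deriv u) r) (deriv u r / r)) + μ * u r * r ^ (-γ) ≤ 0)}

/-!
Below `λ̄'_γ(F)` there is a positive supersolution `φ` with some eigenvalue `μ' > μ`. For `c < 1`
close to `1`, `φ (c r)` is a supersolution with eigenvalue `c^(2-γ) μ' > μ` that stays positive up
to `r = 1`, and adding `ε r^(-α)` with `0 < α < λ(N-1)/Λ - 1` (possible because `Ñ₊ > 2`) gives a
strict supersolution `Ψ` for `μ` that blows up at `0`. If `u` were positive somewhere, the least `c`
with `u ≤ c Ψ` would make `c Ψ` touch `u` from above inside `(0, 1)`, and there ellipticity and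
homogeneity give `0 ≤ F[u] + μ u r^(-γ) ≤ c (F[Ψ] + μ Ψ r^(-γ)) < 0`.
-/

open Topology

lemma Dmat_add (N : ℕ) (a b s t : ℝ) : Dmat N a b + Dmat N s t = Dmat N (a + s) (b + t) := by
  simp only [Dmat, diagonal_add]
  congr 1; funext i; split_ifs <;> rfl

lemma Dmat_smul (N : ℕ) (c a b : ℝ) : c • Dmat N a b = Dmat N (c * a) (c * b) := by
  simp only [Dmat, ← diagonal_smul]
  congr 1; funext i; split_ifs <;> simp [*]

lemma Dmat_isSymm (N : ℕ) (a b : ℝ) : (Dmat N a b).IsSymm := isSymm_diagonal _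

lemma Dmat_posSemidef {N : ℕ} {a b : ℝ} (ha : 0 ≤ a) (hb : 0 ≤ b) : (Dmat N a b).PosSemidef := by
  rw [Dmat, posSemidef_diagonal_iff]
  intro i; split_ifs <;> assumption

lemma Dmat_trace {N : ℕ} (hN : 1 ≤ N) (a b : ℝ) : (Dmat N a b).trace = a + ((N : ℝ) - 1) * b := by
  obtain ⟨n, rfl⟩ := Nat.exists_eq_add_of_le' hN
  simp [Dmat, trace_diagonal, Fin.sum_univ_succ]

section Operator

variable {N : ℕ} {lam Lam : ℝ} {F : Matrix (Fin N) (Fin N) ℝ → ℝ}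

lemma PosHomog.map_zero (hF : PosHomog N F) : F 0 = 0 := by
  have h := hF 2 two_pos 0
  rw [smul_zero] at h
  linarith

lemma PosHomog.map_Dmat_mul (hF : PosHomog N F) {c : ℝ} (hc : 0 < c) (a b : ℝ) :
    F (Dmat N (c * a) (c * b)) = c * F (Dmat N a b) := by
  rw [← Dmat_smul, hF c hc]

lemma UnifElliptic.map_Dmat_mono_left (hF : UnifElliptic N lam Lam F) (hlam : 0 ≤ lam)
    {a a' : ℝ} (ha : a ≤ a') (b : ℝ) : F (Dmat N a b) ≤ F (Dmat N a' b) := by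
  have hP : (Dmat N (a' - a) 0).PosSemidef := Dmat_posSemidef (sub_nonneg.2 ha) le_rfl
  have h := (hF _ _ (Dmat_isSymm N a b) hP).1
  rw [Dmat_add, add_sub_cancel, add_zero] at h
  linarith [mul_nonneg hlam hP.trace_nonneg]

lemma UnifElliptic.map_Dmat_add_le (hF : UnifElliptic N lam Lam F) (hN : 1 ≤ N) (a b : ℝ)
    {s t : ℝ} (hs : 0 ≤ s) (ht : t ≤ 0) :
    F (Dmat N (a + s) (b + t)) ≤ F (Dmat N a b) + Lam * s + lam * ((N : ℝ) - 1) * t := by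
  have h₁ := (hF (Dmat N a (b + t)) (Dmat N s 0) (Dmat_isSymm _ _ _) (Dmat_posSemidef hs le_rfl)).2
  have h₂ := (hF (Dmat N a (b + t)) (Dmat N 0 (-t)) (Dmat_isSymm _ _ _)
    (Dmat_posSemidef le_rfl (neg_nonneg.2 ht))).1
  rw [Dmat_add, Dmat_trace hN, add_zero] at h₁ h₂
  rw [add_neg_cancel_right] at h₂
  linarith

end Operator

section Calculus

variable {f g : ℝ → ℝ} {s : Set ℝ} {x : ℝ}

lemma ContDiffOn.eventually_differentiableAt (hf : ContDiffOn ℝ 2 f s) (hs : IsOpen s)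
    (hx : x ∈ s) : ∀ᶠ y in 𝓝 x, DifferentiableAt ℝ f y :=
  eventually_of_mem (hs.mem_nhds hx) fun y hy =>
    (hf.differentiableOn two_ne_zero y hy).differentiableAt (hs.mem_nhds hy)

lemma ContDiffOn.differentiableAt_deriv (hf : ContDiffOn ℝ 2 f s) (hs : IsOpen s) (hx : x ∈ s) :
    DifferentiableAt ℝ (deriv f) x :=
  ((hf.deriv_of_isOpen (m := 1) hs le_rfl).differentiableOn one_ne_zero x hx).differentiableAt
    (hs.mem_nhds hx)

lemma deriv_add_const_mul (hf : DifferentiableAt ℝ f x) (hg : DifferentiableAt ℝ g x) (c : ℝ) :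
    deriv (fun y => f y + c * g y) x = deriv f x + c * deriv g x := by
  rw [deriv_fun_add hf (hg.const_mul c), deriv_const_mul c hg]

lemma deriv_deriv_add_const_mul (hf : ∀ᶠ y in 𝓝 x, DifferentiableAt ℝ f y)
    (hg : ∀ᶠ y in 𝓝 x, DifferentiableAt ℝ g y) (hf' : DifferentiableAt ℝ (deriv f) x)
    (hg' : DifferentiableAt ℝ (deriv g) x) (c : ℝ) :
    deriv (deriv fun y => f y + c * g y) x = deriv (deriv f) x + c * deriv (deriv g) x := by
  have h : deriv (fun y => f y + c * g y) =ᶠ[𝓝 x] fun y => deriv f y + c * deriv g y := by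
    filter_upwards [hf, hg] with y hfy hgy using deriv_add_const_mul hfy hgy c
  rw [h.deriv_eq, deriv_add_const_mul hf' hg']

/-- If the second derivative were positive, `f` would also have a local minimum at `x`,
so it would be locally constant. -/
lemma IsLocalMax.deriv_deriv_nonpos (h : IsLocalMax f x) (hc : ContinuousAt f x) :
    deriv (deriv f) x ≤ 0 := by
  by_contra! hpos
  have hmin := isLocalMin_of_deriv_deriv_pos hpos h.deriv_eq_zero hc
  have hconst : f =ᶠ[𝓝 x] fun _ => f x := by
    filter_upwards [h, hmin] with y h₁ h₂ using le_antisymm h₁ h₂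
  rw [hconst.deriv.deriv_eq] at hpos
  simp at hpos

end Calculus

def radialOp (N : ℕ) (F : Matrix (Fin N) (Fin N) ℝ → ℝ) (v : ℝ → ℝ) (r : ℝ) : ℝ :=
  F (Dmat N (deriv (deriv v) r) (deriv v r / r))

/-- The positive supersolutions competing in `radialEV`. -/
structure IsRadialSupersolution (N : ℕ) (F : Matrix (Fin N) (Fin N) ℝ → ℝ) (γ μ : ℝ)
    (v : ℝ → ℝ) : Prop where
  contDiffOn : ContDiffOn ℝ 2 v (Ioo 0 1)
  pos : ∀ r ∈ Ioo (0 : ℝ) 1, 0 < v r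
  le : ∀ r ∈ Ioo (0 : ℝ) 1, radialOp N F v r + μ * v r * r ^ (-γ) ≤ 0

section Operator

variable {N : ℕ} {lam Lam : ℝ} {F : Matrix (Fin N) (Fin N) ℝ → ℝ}

lemma PosHomog.exists_supersolution_of_lt_radialEV (hF : PosHomog N F) {γ μ : ℝ}
    (hμ : μ < radialEV N F γ) : ∃ μ' > μ, ∃ φ, IsRadialSupersolution N F γ μ' φ := by
  have hone : ∀ r ∈ Ioo (0 : ℝ) 1,
      F (Dmat N (deriv (deriv fun _ => (1 : ℝ)) r) (deriv (fun _ => (1 : ℝ)) r / r))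
        + 0 * 1 * r ^ (-γ) ≤ 0 := fun r _ => by simp [Dmat, hF.map_zero]
  obtain ⟨μ', ⟨φ, hφ, hpos, hle⟩, hμμ'⟩ := exists_lt_of_lt_csSup
    (by exact ⟨0, fun _ => 1, contDiffOn_const, fun _ _ => one_pos, hone⟩) hμ
  exact ⟨μ', hμμ', φ, hφ, hpos, hle⟩

lemma PosHomog.radialOp_comp_mul (hF : PosHomog N F) {c : ℝ} (hc : 0 < c) (v : ℝ → ℝ) (r : ℝ) :
    radialOp N F (fun x => v (c * x)) r = c ^ 2 * radialOp N F v (c * r) := by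
  have h₁ : deriv (fun x => v (c * x)) = fun x => c * deriv v (c * x) :=
    funext fun x => deriv_comp_mul_left c v x
  have h₂ : deriv (fun x => c * deriv v (c * x)) r = c * (c * deriv (deriv v) (c * r)) := by
    rw [deriv_const_mul_field, deriv_comp_mul_left c (deriv v) r, smul_eq_mul]
  rw [radialOp, radialOp, h₁, h₂, ← hF.map_Dmat_mul (pow_pos hc 2)]
  congr 2
  · ring
  · field_simp

lemma UnifElliptic.radialOp_add_rpow_le (hF : UnifElliptic N lam Lam F) (hN : 1 ≤ N)
    {v : ℝ → ℝ} {r ε α : ℝ} (hv : ∀ᶠ x in 𝓝 r, DifferentiableAt ℝ v x)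
    (hv' : DifferentiableAt ℝ (deriv v) r) (hr : 0 < r) (hε : 0 ≤ ε) (hα : 0 ≤ α) :
    radialOp N F (fun x => v x + ε * x ^ (-α)) r ≤
      radialOp N F v r - ε * α * (lam * ((N : ℝ) - 1) - Lam * (α + 1)) * r ^ (-α - 2) := by
  have hpow : ∀ᶠ x in 𝓝 r, DifferentiableAt ℝ (fun x : ℝ => x ^ (-α)) x :=
    eventually_of_mem (Ioi_mem_nhds hr) fun x hx =>
      differentiableAt_rpow_const_of_ne _ (ne_of_gt hx)
  have hpow' : DifferentiableAt ℝ (deriv fun x : ℝ => x ^ (-α)) r := by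
    rw [deriv_rpow_const']
    exact (differentiableAt_rpow_const_of_ne _ hr.ne').const_mul _
  have h₁ : deriv (fun x => v x + ε * x ^ (-α)) r = deriv v r + ε * (-α * r ^ (-α - 1)) := by
    rw [deriv_add_const_mul hv.self_of_nhds hpow.self_of_nhds, Real.deriv_rpow_const]
  have h₂ : deriv (deriv fun x => v x + ε * x ^ (-α)) r =
      deriv (deriv v) r + ε * (-α * ((-α - 1) * r ^ (-α - 2))) := by
    rw [deriv_deriv_add_const_mul hv hpow hv' hpow', deriv_rpow_const', deriv_const_mul_field,
      Real.deriv_rpow_const, sub_sub, one_add_one_eq_two]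
  have hr₁ : r ^ (-α - 1) = r ^ (-α - 2) * r := by
    rw [← rpow_add_one hr.ne']; ring_nf
  have hs : 0 ≤ ε * α * (α + 1) * r ^ (-α - 2) := by positivity
  have ht : -(ε * α * r ^ (-α - 2)) ≤ 0 := by
    rw [neg_nonpos]; positivity
  calc radialOp N F (fun x => v x + ε * x ^ (-α)) r
      = F (Dmat N (deriv (deriv v) r + ε * α * (α + 1) * r ^ (-α - 2))
          (deriv v r / r + -(ε * α * r ^ (-α - 2)))) := by
        rw [radialOp, h₁, h₂, hr₁]
        congr 2
        · ring
        · field_simp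
    _ ≤ _ := hF.map_Dmat_add_le hN _ _ hs ht
    _ = _ := by rw [radialOp]; ring

lemma UnifElliptic.radialOp_le_of_touching (hF : UnifElliptic N lam Lam F) (hlam : 0 ≤ lam)
    (hF' : PosHomog N F) {u Ψ : ℝ → ℝ} {s : Set ℝ} (hs : IsOpen s) (hu : ContDiffOn ℝ 2 u s)
    (hΨ : ContDiffOn ℝ 2 Ψ s) {c r : ℝ} (hc : 0 < c) (hr : r ∈ s)
    (hle : ∀ x ∈ s, u x ≤ c * Ψ x) (heq : u r = c * Ψ r) :
    radialOp N F u r ≤ c * radialOp N F Ψ r := by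
  have hmax : IsLocalMax (fun x => u x + -c * Ψ x) r :=
    eventually_of_mem (hs.mem_nhds hr) fun x hx => by
      dsimp only
      linarith [hle x hx]
  have hud := hu.eventually_differentiableAt hs hr
  have hΨd := hΨ.eventually_differentiableAt hs hr
  have h₁ : deriv u r = c * deriv Ψ r := by
    have h := hmax.deriv_eq_zero
    rw [deriv_add_const_mul hud.self_of_nhds hΨd.self_of_nhds] at h
    linarith
  have h₂ : deriv (deriv u) r ≤ c * deriv (deriv Ψ) r := by
    have h := hmax.deriv_deriv_nonpos
      (hud.self_of_nhds.continuousAt.add (hΨd.self_of_nhds.continuousAt.const_mul _))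
    rw [deriv_deriv_add_const_mul hud hΨd (hu.differentiableAt_deriv hs hr)
      (hΨ.differentiableAt_deriv hs hr)] at h
    linarith
  calc radialOp N F u r ≤ F (Dmat N (c * deriv (deriv Ψ) r) (c * (deriv Ψ r / r))) := by
        rw [radialOp, h₁, mul_div_assoc]
        exact hF.map_Dmat_mono_left hlam h₂ _
    _ = c * radialOp N F Ψ r := hF'.map_Dmat_mul hc _ _

end Operator

structure IsSingularBarrier (N : ℕ) (F : Matrix (Fin N) (Fin N) ℝ → ℝ) (γ μ : ℝ)
    (Ψ : ℝ → ℝ) : Prop where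
  contDiffOn : ContDiffOn ℝ 2 Ψ (Ioo 0 1)
  continuousOn : ContinuousOn Ψ (Ioc 0 1)
  pos : ∀ r ∈ Ioc (0 : ℝ) 1, 0 < Ψ r
  tendsto_atTop : Tendsto Ψ (𝓝[>] 0) atTop
  lt : ∀ r ∈ Ioo (0 : ℝ) 1, radialOp N F Ψ r + μ * Ψ r * r ^ (-γ) < 0

/-- Maximize `u / Ψ` over `[δ, 1]`, with `δ` so small that `u ≤ M ≤ (u r₁ / Ψ r₁) Ψ` on `(0, δ)`;
the maximum is not attained at `1`, where `u ≤ 0`. -/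
lemma exists_touching_multiple {u Ψ : ℝ → ℝ} (huc : ContinuousOn u (Icc 0 1)) (hu1 : u 1 ≤ 0)
    (hΨc : ContinuousOn Ψ (Ioc 0 1)) (hΨpos : ∀ r ∈ Ioc (0 : ℝ) 1, 0 < Ψ r)
    (hΨ0 : Tendsto Ψ (𝓝[>] 0) atTop) {r₁ : ℝ} (hr₁ : r₁ ∈ Ioo (0 : ℝ) 1) (hur₁ : 0 < u r₁) :
    ∃ c > 0, ∃ r ∈ Ioo (0 : ℝ) 1, u r = c * Ψ r ∧ ∀ x ∈ Ioo (0 : ℝ) 1, u x ≤ c * Ψ x := by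
  have hc₁ : 0 < u r₁ / Ψ r₁ := div_pos hur₁ (hΨpos r₁ (Ioo_subset_Ioc_self hr₁))
  obtain ⟨M, hM⟩ := isCompact_Icc.bddAbove_image huc
  obtain ⟨δ, hδ, hδM⟩ := mem_nhdsGT_iff_exists_Ioo_subset.1
    ((hΨ0.const_mul_atTop hc₁).eventually_ge_atTop M)
  set δ' := min δ r₁
  have hδ' : 0 < δ' := lt_min hδ hr₁.1
  have hsub : Icc δ' 1 ⊆ Ioc 0 1 := fun x hx => ⟨hδ'.trans_le hx.1, hx.2⟩
  obtain ⟨r, hr, hmax⟩ := isCompact_Icc.exists_isMaxOn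
    (nonempty_Icc.2 ((min_le_right _ _).trans hr₁.2.le))
    ((huc.mono (hsub.trans Ioc_subset_Icc_self)).div (hΨc.mono hsub)
      fun x hx => (hΨpos x (hsub hx)).ne')
  have hc : u r₁ / Ψ r₁ ≤ u r / Ψ r := hmax ⟨min_le_right _ _, hr₁.2.le⟩
  have hΨr := hΨpos r (hsub hr)
  have hr1 : r ≠ 1 := by
    rintro rfl
    linarith [div_nonpos_of_nonpos_of_nonneg hu1 hΨr.le]
  refine ⟨u r / Ψ r, hc₁.trans_le hc, r, ⟨hδ'.trans_le hr.1, hr.2.lt_of_ne hr1⟩,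
    (div_mul_cancel₀ _ hΨr.ne').symm, fun x hx => ?_⟩
  have hΨx := hΨpos x (Ioo_subset_Ioc_self hx)
  rcases lt_or_ge x δ' with hxδ | hxδ
  · calc u x ≤ M := hM ⟨x, Ioo_subset_Icc_self hx, rfl⟩
      _ ≤ u r₁ / Ψ r₁ * Ψ x := hδM ⟨hx.1, hxδ.trans_le (min_le_left _ _)⟩
      _ ≤ u r / Ψ r * Ψ x := by gcongr
  · exact (div_le_iff₀ hΨx).1 (hmax ⟨hxδ, hx.2.le⟩)

theorem UnifElliptic.nonpos_of_isSingularBarrier {N : ℕ} {lam Lam : ℝ}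
    {F : Matrix (Fin N) (Fin N) ℝ → ℝ} (hF : UnifElliptic N lam Lam F) (hlam : 0 ≤ lam)
    (hF' : PosHomog N F) {γ μ : ℝ} {Ψ u : ℝ → ℝ} (hΨ : IsSingularBarrier N F γ μ Ψ)
    (huc : ContinuousOn u (Icc 0 1)) (hu : ContDiffOn ℝ 2 u (Ioo 0 1))
    (hsub : ∀ r ∈ Ioo (0 : ℝ) 1, 0 ≤ radialOp N F u r + μ * u r * r ^ (-γ)) (hu1 : u 1 ≤ 0) :
    ∀ r ∈ Icc (0 : ℝ) 1, u r ≤ 0 := by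
  have hIoo : ∀ r ∈ Ioo (0 : ℝ) 1, u r ≤ 0 := by
    by_contra! ⟨r₁, hr₁, hur₁⟩
    obtain ⟨c, hc, r, hr, heq, hle⟩ := exists_touching_multiple huc hu1 hΨ.continuousOn hΨ.pos
      hΨ.tendsto_atTop hr₁ hur₁
    have hcmp := hF.radialOp_le_of_touching hlam hF' isOpen_Ioo hu hΨ.contDiffOn hc hr hle heq
    have hneg := mul_neg_of_pos_of_neg hc (hΨ.lt r hr)
    have hsubr := hsub r hr
    rw [heq] at hsubr
    linarith
  intro r hr
  refine ContinuousWithinAt.closure_le (by rwa [closure_Ioo zero_ne_one])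
    ((huc r hr).mono Ioo_subset_Icc_self) continuousWithinAt_const hIoo

lemma exists_lt_rpow_mul_of_lt {μ μ' : ℝ} (p : ℝ) (h : μ < μ') :
    ∃ c ∈ Ioo (0 : ℝ) 1, μ < c ^ p * μ' := by
  have hcont : ContinuousAt (fun c : ℝ => c ^ p * μ') 1 :=
    (continuousAt_rpow_const 1 p (Or.inl one_ne_zero)).mul continuousAt_const
  have hlim : Tendsto (fun c : ℝ => c ^ p * μ') (𝓝[<] 1) (𝓝 μ') := by
    simpa using hcont.tendsto.mono_left nhdsWithin_le_nhds
  obtain ⟨c, hcμ, hc⟩ := ((hlim.eventually (lt_mem_nhds h)).and (Ioo_mem_nhdsLT one_pos)).exists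
  exact ⟨c, hc, hcμ⟩

lemma exists_forall_mul_rpow_lt {p K : ℝ} (hp : 0 < p) (hK : 0 < K) (μ : ℝ) :
    ∃ r₀ ∈ Ioc (0 : ℝ) 1, ∀ r ∈ Ioo 0 r₀, μ * r ^ p < K := by
  have hcont : Continuous fun r : ℝ => μ * r ^ p :=
    continuous_const.mul (continuous_rpow_const hp.le)
  have hlim : Tendsto (fun r : ℝ => μ * r ^ p) (𝓝[>] 0) (𝓝 0) := by
    simpa [zero_rpow hp.ne'] using (hcont.tendsto 0).mono_left nhdsWithin_le_nhds
  obtain ⟨r₀, hr₀, hsub⟩ := mem_nhdsGT_iff_exists_Ioo_subset.1 (hlim.eventually (gt_mem_nhds hK))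
  exact ⟨min r₀ 1, ⟨lt_min hr₀ one_pos, min_le_right _ _⟩, fun r hr =>
    hsub ⟨hr.1, hr.2.trans_le (min_le_left _ _)⟩⟩

lemma mapsTo_const_mul_Ioo_inv {c : ℝ} (hc : 0 < c) :
    MapsTo (fun x => c * x) (Ioo 0 c⁻¹) (Ioo 0 1) := fun x hx =>
  ⟨mul_pos hc hx.1, by simpa [hc.ne'] using mul_lt_mul_of_pos_left hx.2 hc⟩

section Barrier

variable {N : ℕ} {lam Lam : ℝ} {F : Matrix (Fin N) (Fin N) ℝ → ℝ} {γ μ' : ℝ} {φ : ℝ → ℝ}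

lemma IsRadialSupersolution.contDiffOn_comp_mul (hφ : IsRadialSupersolution N F γ μ' φ)
    {c : ℝ} (hc : 0 < c) : ContDiffOn ℝ 2 (fun x => φ (c * x)) (Ioo 0 c⁻¹) :=
  hφ.contDiffOn.comp (contDiffOn_const.mul contDiffOn_id) (mapsTo_const_mul_Ioo_inv hc)

lemma IsRadialSupersolution.radialOp_comp_mul_add_rpow_le (hφ : IsRadialSupersolution N F γ μ' φ)
    (hF : UnifElliptic N lam Lam F) (hF' : PosHomog N F) (hN : 1 ≤ N) {c ε α r : ℝ}
    (hc : c ∈ Ioc (0 : ℝ) 1) (hr : r ∈ Ioo (0 : ℝ) 1) (hε : 0 ≤ ε) (hα : 0 ≤ α) (μ : ℝ) :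
    radialOp N F (fun x => φ (c * x) + ε * x ^ (-α)) r
        + μ * (φ (c * r) + ε * r ^ (-α)) * r ^ (-γ) ≤
      (μ - c ^ (2 - γ) * μ') * φ (c * r) * r ^ (-γ)
        + ε * (μ * r ^ (-α - γ) - α * (lam * ((N : ℝ) - 1) - Lam * (α + 1)) * r ^ (-α - 2)) := by
  have hrc : r ∈ Ioo 0 c⁻¹ := ⟨hr.1, hr.2.trans_le ((one_le_inv₀ hc.1).2 hc.2)⟩
  have hφc := hφ.contDiffOn_comp_mul hc.1
  have h₁ := hF.radialOp_add_rpow_le hN (hφc.eventually_differentiableAt isOpen_Ioo hrc)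
    (hφc.differentiableAt_deriv isOpen_Ioo hrc) hr.1 hε hα
  rw [hF'.radialOp_comp_mul hc.1] at h₁
  have h₂ := hφ.le (c * r) (mapsTo_const_mul_Ioo_inv hc.1 hrc)
  rw [mul_rpow hc.1.le hr.1.le] at h₂
  have hc₂ : c ^ (2 - γ) = c ^ 2 * c ^ (-γ) := by
    rw [sub_eq_add_neg, rpow_add hc.1, rpow_two]
  have hr₂ : r ^ (-α - γ) = r ^ (-α) * r ^ (-γ) := by
    rw [sub_eq_add_neg, rpow_add hr.1]
  rw [hc₂, hr₂]
  linear_combination h₁ + c ^ 2 * h₂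

lemma IsRadialSupersolution.radialOp_comp_mul_add_rpow_lt (hφ : IsRadialSupersolution N F γ μ' φ)
    (hF : UnifElliptic N lam Lam F) (hF' : PosHomog N F) (hN : 1 ≤ N) (hγ0 : 0 ≤ γ)
    {c ε α ρ δ₀ μ : ℝ} (hc : c ∈ Ioc (0 : ℝ) 1) (hcμ : μ < c ^ (2 - γ) * μ') (hε : 0 ≤ ε)
    (hα : 0 ≤ α) (hκ : 0 ≤ lam * ((N : ℝ) - 1) - Lam * (α + 1)) (hρ : 0 < ρ)
    (hρμ : ∀ r ∈ Ioo 0 ρ, μ * r ^ (2 - γ) < α * (lam * ((N : ℝ) - 1) - Lam * (α + 1)))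
    (hδ₀ : ∀ r ∈ Icc ρ 1, δ₀ ≤ φ (c * r))
    (hεδ₀ : |μ| * ρ ^ (-α - γ) * ε < (c ^ (2 - γ) * μ' - μ) * δ₀) {r : ℝ} (hr : r ∈ Ioo (0 : ℝ) 1) :
    radialOp N F (fun x => φ (c * x) + ε * x ^ (-α)) r
      + μ * (φ (c * r) + ε * r ^ (-α)) * r ^ (-γ) < 0 := by
  set κ := lam * ((N : ℝ) - 1) - Lam * (α + 1)
  refine (hφ.radialOp_comp_mul_add_rpow_le hF hF' hN hc hr hε hα μ).trans_lt ?_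
  have hφr : 0 < φ (c * r) :=
    hφ.pos _ ⟨mul_pos hc.1 hr.1, (mul_le_of_le_one_left hr.1.le hc.2).trans_lt hr.2⟩
  have hrγ : 0 < r ^ (-γ) := rpow_pos_of_pos hr.1 _
  have hr₂ : 0 < r ^ (-α - 2) := rpow_pos_of_pos hr.1 _
  -- Near `0` the term `ε r^(-α)` is a supersolution by itself; on `[ρ, 1]` its error is
  -- absorbed by the gap `c^(2-γ) μ' - μ`, thanks to the choice of `ε`.
  rcases lt_or_ge r ρ with hrρ | hrρ
  · have h₁ : μ * r ^ (-α - γ) ≤ α * κ * r ^ (-α - 2) := by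
      rw [show -α - γ = (2 - γ) + (-α - 2) by ring, rpow_add hr.1, ← mul_assoc]
      exact mul_le_mul_of_nonneg_right (hρμ r ⟨hr.1, hrρ⟩).le hr₂.le
    have h₂ : (μ - c ^ (2 - γ) * μ') * φ (c * r) * r ^ (-γ) < 0 :=
      mul_neg_of_neg_of_pos (mul_neg_of_neg_of_pos (by linarith) hφr) hrγ
    linarith [mul_le_mul_of_nonneg_left h₁ hε]
  · have hγr : 1 ≤ r ^ (-γ) :=
      one_le_rpow_of_pos_of_le_one_of_nonpos hr.1 hr.2.le (neg_nonpos.2 hγ0)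
    have h₁ : δ₀ ≤ φ (c * r) * r ^ (-γ) :=
      (hδ₀ r ⟨hrρ, hr.2.le⟩).trans (le_mul_of_one_le_right hφr.le hγr)
    have h₂ : μ * r ^ (-α - γ) ≤ |μ| * ρ ^ (-α - γ) :=
      mul_le_mul (le_abs_self μ) (rpow_le_rpow_of_nonpos hρ hrρ (by linarith))
        (rpow_pos_of_pos hr.1 _).le (abs_nonneg μ)
    have h₃ : 0 ≤ α * κ * r ^ (-α - 2) := by positivity
    linarith [mul_le_mul_of_nonneg_left h₁ (sub_pos.2 hcμ).le, mul_le_mul_of_nonneg_left h₂ hε,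
      mul_nonneg hε h₃]

lemma IsRadialSupersolution.isSingularBarrier_comp_mul_add_rpow
    (hφ : IsRadialSupersolution N F γ μ' φ) (hF : UnifElliptic N lam Lam F) (hF' : PosHomog N F)
    (hN : 1 ≤ N) (hγ0 : 0 ≤ γ) {c ε α ρ δ₀ μ : ℝ} (hc : c ∈ Ioo (0 : ℝ) 1)
    (hcμ : μ < c ^ (2 - γ) * μ') (hε : 0 < ε) (hα : 0 < α)
    (hκ : 0 ≤ lam * ((N : ℝ) - 1) - Lam * (α + 1)) (hρ : 0 < ρ)
    (hρμ : ∀ r ∈ Ioo 0 ρ, μ * r ^ (2 - γ) < α * (lam * ((N : ℝ) - 1) - Lam * (α + 1)))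
    (hδ₀ : ∀ r ∈ Icc ρ 1, δ₀ ≤ φ (c * r))
    (hεδ₀ : |μ| * ρ ^ (-α - γ) * ε < (c ^ (2 - γ) * μ' - μ) * δ₀) :
    IsSingularBarrier N F γ μ (fun x => φ (c * x) + ε * x ^ (-α)) := by
  have hsub : Ioc 0 1 ⊆ Ioo 0 c⁻¹ := fun x hx => ⟨hx.1, hx.2.trans_lt ((one_lt_inv₀ hc.1).2 hc.2)⟩
  have hΨ : ContDiffOn ℝ 2 (fun x => φ (c * x) + ε * x ^ (-α)) (Ioo 0 c⁻¹) :=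
    (hφ.contDiffOn_comp_mul hc.1).add (contDiffOn_const.mul fun x hx =>
      (contDiffAt_rpow_const_of_ne hx.1.ne').contDiffWithinAt)
  have hΨε : ∀ x ∈ Ioo 0 c⁻¹, ε * x ^ (-α) < φ (c * x) + ε * x ^ (-α) := fun x hx =>
    lt_add_of_pos_left _ (hφ.pos _ (mapsTo_const_mul_Ioo_inv hc.1 hx))
  refine ⟨hΨ.mono (Ioo_subset_Ioc_self.trans hsub), hΨ.continuousOn.mono hsub,
    fun x hx => (mul_pos hε (rpow_pos_of_pos hx.1 _)).trans (hΨε x (hsub hx)), ?_,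
    fun r hr => hφ.radialOp_comp_mul_add_rpow_lt hF hF' hN hγ0 ⟨hc.1, hc.2.le⟩ hcμ hε.le hα.le
      hκ hρ hρμ hδ₀ hεδ₀ hr⟩
  exact tendsto_atTop_mono' _
    (eventually_of_mem (Ioo_mem_nhdsGT (inv_pos.2 hc.1)) fun x hx => (hΨε x hx).le)
    ((tendsto_rpow_neg_nhdsGT_zero (neg_neg_of_pos hα)).const_mul_atTop hε)

theorem IsRadialSupersolution.exists_isSingularBarrier
    (hφ : IsRadialSupersolution N F γ μ' φ) (hF : UnifElliptic N lam Lam F) (hF' : PosHomog N F)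
    (hN : 1 ≤ N) (hNL : Lam < lam * ((N : ℝ) - 1)) (hγ0 : 0 ≤ γ) (hγ2 : γ < 2) {μ : ℝ}
    (hμ : μ < μ') : ∃ Ψ, IsSingularBarrier N F γ μ Ψ := by
  obtain ⟨α, hα, hακ⟩ := exists_pos_mul_lt (sub_pos.2 hNL) Lam
  have hκ : 0 < lam * ((N : ℝ) - 1) - Lam * (α + 1) := by linarith
  obtain ⟨c, hc, hcμ⟩ := exists_lt_rpow_mul_of_lt (2 - γ) hμ
  obtain ⟨ρ, hρ, hρμ⟩ := exists_forall_mul_rpow_lt (by linarith : 0 < 2 - γ) (mul_pos hα hκ) μ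
  have hsub : Icc ρ 1 ⊆ Ioo 0 c⁻¹ := fun x hx =>
    ⟨hρ.1.trans_le hx.1, hx.2.trans_lt ((one_lt_inv₀ hc.1).2 hc.2)⟩
  obtain ⟨δ₀, hδ₀, hφδ₀⟩ := isCompact_Icc.exists_forall_le'
    ((hφ.contDiffOn_comp_mul hc.1).continuousOn.mono hsub) fun x hx =>
      hφ.pos _ (mapsTo_const_mul_Ioo_inv hc.1 (hsub hx))
  obtain ⟨ε, hε, hεδ₀⟩ := exists_pos_mul_lt (mul_pos (sub_pos.2 hcμ) hδ₀) (|μ| * ρ ^ (-α - γ))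
  exact ⟨_, hφ.isSingularBarrier_comp_mul_add_rpow hF hF' hN hγ0 hc hcμ hε hα hκ.le hρ.1 hρμ
    hφδ₀ hεδ₀⟩

end Barrier

theorem stmt13_general (N : ℕ) (hN : 2 ≤ N) (lam Lam : ℝ) (hlam : 0 < lam) (hlL : lam ≤ Lam)
    (hNp : 2 < lam / Lam * ((N : ℝ) - 1) + 1)
    (F : Matrix (Fin N) (Fin N) ℝ → ℝ)
    (hF1 : UnifElliptic N lam Lam F) (hF3 : PosHomog N F)
    (γ : ℝ) (hγ0 : 0 < γ) (hγ2 : γ < 2)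
    (μ : ℝ) (hμ : μ < radialEV N F γ)
    (u : ℝ → ℝ) (huc : ContinuousOn u (Icc 0 1)) (hu2 : ContDiffOn ℝ 2 u (Ioo 0 1))
    (hineq : ∀ r ∈ Ioo (0:ℝ) 1,
      0 ≤ F (Dmat N (deriv (deriv u) r) (deriv u r / r)) + μ * u r * r ^ (-γ))
    (hbd : u 1 ≤ 0) :
    ∀ r ∈ Icc (0:ℝ) 1, u r ≤ 0 := by
  have hNL : Lam < lam * ((N : ℝ) - 1) := by
    rw [div_mul_eq_mul_div] at hNp
    exact (one_lt_div (hlam.trans_le hlL)).1 (by linarith)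
  obtain ⟨μ', hμμ', φ, hφ⟩ := hF3.exists_supersolution_of_lt_radialEV hμ
  obtain ⟨Ψ, hΨ⟩ := hφ.exists_isSingularBarrier hF1 hF3 (by omega) hNL hγ0.le hγ2 hμμ'
  exact hF1.nonpos_of_isSingularBarrier hlam.le hF3 hΨ huc hu2 hineq hbd

theorem stmt13 (N : ℕ) (hN : 2 ≤ N) (lam Lam : ℝ) (hlam : 0 < lam) (hlL : lam ≤ Lam)
    (hNp : 2 < lam / Lam * ((N : ℝ) - 1) + 1)
    (F : Matrix (Fin N) (Fin N) ℝ → ℝ)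
    (hF1 : UnifElliptic N lam Lam F) (hF2 : RotInvariant N F) (hF3 : PosHomog N F)
    (γ : ℝ) (hγ0 : 0 < γ) (hγ2 : γ < 2)
    (μ : ℝ) (hμ : μ < radialEV N F γ)
    (u : ℝ → ℝ) (huc : ContinuousOn u (Icc 0 1)) (hu2 : ContDiffOn ℝ 2 u (Ioo 0 1))
    (hineq : ∀ r ∈ Ioo (0:ℝ) 1,
      0 ≤ F (Dmat N (deriv (deriv u) r) (deriv u r / r)) + μ * u r * r ^ (-γ))
    (hbd : u 1 ≤ 0) :
    ∀ r ∈ Icc (0:ℝ) 1, u r ≤ 0 :=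
  stmt13_general N hN lam Lam hlam hlL hNp F hF1 hF3 γ hγ0 hγ2 μ hμ u huc hu2 hineq hbd
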